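/- If f̂(ξ,q,p) and ĝ(ξ,q,p) are convergent power series (elements of C{ξ,q,p}), then their Borel-star product f̂ ∗ ĝ := β(β⁻¹f̂ ⋆_S β⁻¹ĝ) is also a convergent power series in C{ξ,q,p}. Consequently, the space of 1-Gevrey formal series β⁻¹(C{ξ,q,p}) ⊂ C[[t,q,p]] is closed under the standard star product ⋆_S. -/

import Mathlib

open MvPowerSeries

noncomputable section

/-- Formal power series ring `ℂ[[t,q,p]]`, variable `0 = t`, `1 = q`, `2 = p`. -/
abbrev F3 : Type := MvPowerSeries (Fin 3) ℂ

/-- Formal partial derivative with respect to variable `i`. -/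
def pd (i : Fin 3) (f : F3) : F3 :=
  fun n => ((n i : ℂ) + 1) * MvPowerSeries.coeff (n + Finsupp.single i 1) f

/-- Moyal star product
`f ⋆_M g = Σ_k (t^k/(2^k k!)) Σ_{n=0}^k (-1)^(k-n) C(k,n) (∂_p^n ∂_q^(k-n) f)(∂_p^(k-n) ∂_q^n g)`,
written coefficientwise. -/
def starM (f g : F3) : F3 := fun w =>
  ∑ k ∈ Finset.range (w 0 + 1),
    (((2 ^ k * k.factorial : ℕ) : ℂ))⁻¹ *
      MvPowerSeries.coeff (w - Finsupp.single 0 k)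
        (∑ n ∈ Finset.range (k + 1),
          (((-1 : ℂ)) ^ (k - n) * (k.choose n : ℂ)) •
            ((pd 2)^[n] ((pd 1)^[k - n] f) * (pd 2)^[k - n] ((pd 1)^[n] g)))

/-- Standard star product `f ⋆_S g = Σ_k (t^k/k!) (∂_p^k f)(∂_q^k g)`, coefficientwise. -/
def starS (f g : F3) : F3 := fun w =>
  ∑ k ∈ Finset.range (w 0 + 1),
    ((k.factorial : ℂ))⁻¹ *
      MvPowerSeries.coeff (w - Finsupp.single 0 k) ((pd 2)^[k] f * (pd 1)^[k] g)
/-- The formal Borel transform with respect to t (variable 0). -/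
def borelT (f : F3) : F3 := fun w =>
  (((w 0).factorial : ℂ))⁻¹ * MvPowerSeries.coeff w f

/-- The inverse formal Borel transform. -/
def borelTInv (f : F3) : F3 := fun w =>
  ((w 0).factorial : ℂ) * MvPowerSeries.coeff w f

/-- Borel counterpart of the standard star product: f̂ ∗ ĝ := β(β⁻¹f̂ ⋆_S β⁻¹ĝ). -/
def astS (f g : F3) : F3 := borelT (starS (borelTInv f) (borelTInv g))

/-- A formal power series is convergent (an element of ℂ{ξ,q,p}) iff its coefficients
admit a geometric bound. -/
def IsConvergent (f : F3) : Prop :=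
  ∃ C r : ℝ, ∀ n : Fin 3 →₀ ℕ,
    ‖MvPowerSeries.coeff n f‖ ≤ C * r ^ (n.sum fun _ e => e)

/-!
Write `F = β⁻¹ f̂`: `f̂` is convergent iff `‖F_n‖ ≤ C n₀! r^|n|` for some `C`, `r`. The `k`-th term
of `F ⋆_S G` carries a factor `1/k!` and the derivatives `∂_p^k`, `∂_q^k`, each of which costs at
most `k! 2^(|n|+k)` on coefficients. One `k!` cancels the `1/k!`; the other combines with the
`(n₀ - k)!` coming from the bounds on `F` and `G` into `n₀!`, since `k! (n₀ - k)! ≤ n₀!`. All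
remaining factors are geometric in `|n|`, so `F ⋆_S G` satisfies a bound of the same shape.
-/

open Finset
open scoped Nat

lemma Finsupp.card_antidiagonal_le_two_pow_degree {σ : Type*} [DecidableEq σ] (f : σ →₀ ℕ) :
    #(antidiagonal f) ≤ 2 ^ f.degree :=
  calc #(antidiagonal f) ≤ Multiset.card (Finsupp.toMultiset f).antidiagonal := by
        show #(Multiset.toFinsupp _).support ≤ _
        rw [Multiset.toFinsupp_support]
        exact (Multiset.toFinset_card_le _).trans (Multiset.card_map _ _).le
    _ = 2 ^ f.degree := by
        rw [Multiset.card_antidiagonal, Finsupp.card_toMultiset]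
        rfl

lemma MvPowerSeries.norm_coeff_mul_le {σ R : Type*} [DecidableEq σ] [NormedRing R]
    {f g : MvPowerSeries σ R} {w : σ →₀ ℕ} {M : ℝ}
    (hM : ∀ a b, a + b = w → ‖coeff a f‖ * ‖coeff b g‖ ≤ M) :
    ‖coeff w (f * g)‖ ≤ 2 ^ w.degree * M := by
  have hM₀ : 0 ≤ M := (by positivity : 0 ≤ ‖coeff w f‖ * ‖coeff 0 g‖).trans (hM _ _ (add_zero w))
  rw [coeff_mul]
  calc ‖∑ p ∈ antidiagonal w, coeff p.1 f * coeff p.2 g‖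
      ≤ ∑ p ∈ antidiagonal w, ‖coeff p.1 f‖ * ‖coeff p.2 g‖ :=
        norm_sum_le_of_le _ fun p _ => norm_mul_le _ _
    _ ≤ #(antidiagonal w) • M :=
        sum_le_card_nsmul _ _ _ fun p hp => hM p.1 p.2 (mem_antidiagonal.1 hp)
    _ ≤ 2 ^ w.degree * M := by
        rw [nsmul_eq_mul]
        gcongr
        exact_mod_cast Finsupp.card_antidiagonal_le_two_pow_degree w

lemma Nat.succ_ascFactorial_le (n k : ℕ) : (n + 1).ascFactorial k ≤ k ! * 2 ^ (n + k) := by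
  rw [Nat.ascFactorial_eq_factorial_mul_choose]
  exact Nat.mul_le_mul_left _ (Nat.choose_le_two_pow _ _)

lemma coeff_iterate_pd (i : Fin 3) (k : ℕ) (F : F3) (m : Fin 3 →₀ ℕ) :
    coeff m ((pd i)^[k] F) = ((m i + 1).ascFactorial k : ℂ) * coeff (m + Finsupp.single i k) F := by
  induction k generalizing F with
  | zero => simp
  | succ k ih =>
    rw [Function.iterate_succ_apply, ih]
    show _ * (((m + Finsupp.single i k) i + 1 : ℂ) * coeff _ F) = _
    rw [add_assoc, ← Finsupp.single_add, Nat.ascFactorial_succ]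
    simp only [Finsupp.add_apply, Finsupp.single_eq_same]
    push_cast
    ring

lemma norm_coeff_iterate_pd_le (i : Fin 3) (k : ℕ) (F : F3) (m : Fin 3 →₀ ℕ) :
    ‖coeff m ((pd i)^[k] F)‖ ≤ (k ! * 2 ^ (m i + k) : ℕ) * ‖coeff (m + Finsupp.single i k) F‖ := by
  rw [coeff_iterate_pd, norm_mul, Complex.norm_natCast]
  gcongr
  exact_mod_cast Nat.succ_ascFactorial_le _ _

def GevreyBound (C r : ℝ) (F : F3) : Prop :=
  ∀ n, ‖coeff n F‖ ≤ C * (n 0)! * r ^ n.degree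

namespace GevreyBound

variable {C D r : ℝ} {F G : F3}

lemma mono {s : ℝ} (hF : GevreyBound C r F) (hC : 0 ≤ C) (hr : 0 ≤ r) (hrs : r ≤ s) :
    GevreyBound C s F :=
  fun n => (hF n).trans (by gcongr)

lemma norm_coeff_iterate_pd_le (hF : GevreyBound C r F) {i : Fin 3} (hi : i ≠ 0) (k : ℕ)
    (m : Fin 3 →₀ ℕ) :
    ‖coeff m ((pd i)^[k] F)‖ ≤ (k ! * 2 ^ (m i + k) : ℕ) * (C * (m 0)! * r ^ (m.degree + k)) := by
  refine (_root_.norm_coeff_iterate_pd_le i k F m).trans ?_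
  have h0 : (m + Finsupp.single i k) 0 = m 0 := by simp [hi]
  have hdeg : (m + Finsupp.single i k).degree = m.degree + k := by
    rw [map_add, Finsupp.degree_single]
  gcongr
  simpa only [h0, hdeg] using hF (m + Finsupp.single i k)

lemma norm_coeff_pd_mul_pd_le (hF : GevreyBound C r F) (hG : GevreyBound D r G)
    (hC : 0 ≤ C) (hD : 0 ≤ D) (hr : 0 ≤ r) (k : ℕ) (w : Fin 3 →₀ ℕ) :
    ‖coeff w ((pd 2)^[k] F * (pd 1)^[k] G)‖ ≤
      k ! ^ 2 * (C * D) * (w 0)! * 4 ^ (w.degree + k) * r ^ (w.degree + 2 * k) := by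
  have hpair : ∀ a b, a + b = w →
      ‖coeff a ((pd 2)^[k] F)‖ * ‖coeff b ((pd 1)^[k] G)‖ ≤
        k ! ^ 2 * (C * D) * (w 0)! * 2 ^ (w.degree + 2 * k) * r ^ (w.degree + 2 * k) := by
    rintro a b rfl
    have h1 := hF.norm_coeff_iterate_pd_le (by decide : (2 : Fin 3) ≠ 0) k a
    have h2 := hG.norm_coeff_iterate_pd_le (by decide : (1 : Fin 3) ≠ 0) k b
    have hfact : (a 0)! * (b 0)! ≤ ((a + b) 0)! := Nat.factorial_mul_factorial_dvd_factorial_add _ _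
      |> Nat.le_of_dvd (Nat.factorial_pos _)
    have hexp : a 2 + k + (b 1 + k) ≤ (a + b).degree + 2 * k := by
      have := Finsupp.le_degree 2 a
      have := Finsupp.le_degree 1 b
      rw [map_add]
      omega
    calc ‖coeff a ((pd 2)^[k] F)‖ * ‖coeff b ((pd 1)^[k] G)‖
        ≤ ((k ! * 2 ^ (a 2 + k) : ℕ) * (C * (a 0)! * r ^ (a.degree + k))) *
            ((k ! * 2 ^ (b 1 + k) : ℕ) * (D * (b 0)! * r ^ (b.degree + k))) :=
          mul_le_mul h1 h2 (norm_nonneg _) ((norm_nonneg _).trans h1)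
      _ = k ! ^ 2 * (C * D) * ((a 0)! * (b 0)! : ℕ) * 2 ^ (a 2 + k + (b 1 + k)) *
            r ^ ((a + b).degree + 2 * k) := by
          rw [map_add]
          push_cast
          ring
      _ ≤ k ! ^ 2 * (C * D) * ((a + b) 0)! * 2 ^ ((a + b).degree + 2 * k) *
            r ^ ((a + b).degree + 2 * k) := by
          gcongr
          exact one_le_two
  refine (MvPowerSeries.norm_coeff_mul_le hpair).trans_eq ?_
  rw [show (4 : ℝ) = 2 * 2 by norm_num, mul_pow, ← pow_add]
  ring_nf

lemma norm_starS_term_le (hF : GevreyBound C r F) (hG : GevreyBound D r G)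
    (hC : 0 ≤ C) (hD : 0 ≤ D) (hr : 1 ≤ r) (k : ℕ) (w : Fin 3 →₀ ℕ) :
    ‖(k ! : ℂ)⁻¹ * coeff w ((pd 2)^[k] F * (pd 1)^[k] G)‖ ≤
      C * D * (w 0 + k)! * 4 ^ (w.degree + k) * r ^ (2 * (w.degree + k)) := by
  have hk : (0 : ℝ) < k ! := by positivity
  rw [norm_mul, norm_inv, Complex.norm_natCast, inv_mul_le_iff₀ hk]
  refine (hF.norm_coeff_pd_mul_pd_le hG hC hD (by linarith) k w).trans ?_
  have hfact : k ! * (w 0)! ≤ (w 0 + k)! := by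
    simpa [add_comm, mul_comm] using Nat.factorial_mul_factorial_dvd_factorial_add k (w 0)
      |> Nat.le_of_dvd (Nat.factorial_pos _)
  calc (k ! : ℝ) ^ 2 * (C * D) * (w 0)! * 4 ^ (w.degree + k) * r ^ (w.degree + 2 * k)
      = k ! * ((k ! * (w 0)! : ℕ) * (C * D) * 4 ^ (w.degree + k) * r ^ (w.degree + 2 * k)) := by
        push_cast
        ring
    _ ≤ k ! * ((w 0 + k)! * (C * D) * 4 ^ (w.degree + k) * r ^ (2 * (w.degree + k))) := by
        gcongr
        omega
    _ = _ := by ring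

lemma starS (hF : GevreyBound C r F) (hG : GevreyBound D r G)
    (hC : 0 ≤ C) (hD : 0 ≤ D) (hr : 1 ≤ r) :
    GevreyBound (C * D) (8 * r ^ 2) (_root_.starS F G) := by
  intro w
  have hterm : ∀ k ∈ range (w 0 + 1),
      ‖(k ! : ℂ)⁻¹ * coeff (w - Finsupp.single 0 k) ((pd 2)^[k] F * (pd 1)^[k] G)‖ ≤
        C * D * (w 0)! * 4 ^ w.degree * r ^ (2 * w.degree) := by
    intro k hk
    set w' : Fin 3 →₀ ℕ := w - Finsupp.single 0 k
    have hsplit : w' + Finsupp.single 0 k = w :=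
      tsub_add_cancel_of_le (Finsupp.single_le_iff.2 (Nat.lt_succ_iff.1 (mem_range.1 hk)))
    have h0 : w' 0 + k = w 0 := by
      simpa using congrArg (· 0) hsplit
    have hdeg : w'.degree + k = w.degree := by
      simpa [Finsupp.degree_single] using congrArg Finsupp.degree hsplit
    simpa only [h0, hdeg] using norm_starS_term_le hF hG hC hD hr k w'
  have hlen : w 0 + 1 ≤ 2 ^ w.degree :=
    (Nat.lt_two_pow_self).trans_le (Nat.pow_le_pow_right two_pos (Finsupp.le_degree 0 w))
  calc ‖coeff w (_root_.starS F G)‖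
      ≤ ∑ _k ∈ range (w 0 + 1), C * D * (w 0)! * 4 ^ w.degree * r ^ (2 * w.degree) :=
        norm_sum_le_of_le _ hterm
    _ = (w 0 + 1 : ℕ) * (C * D * (w 0)! * 4 ^ w.degree * r ^ (2 * w.degree)) := by
        rw [sum_const, card_range, nsmul_eq_mul]
    _ ≤ 2 ^ w.degree * (C * D * (w 0)! * 4 ^ w.degree * r ^ (2 * w.degree)) := by
        gcongr
        exact_mod_cast hlen
    _ = C * D * (w 0)! * (8 * r ^ 2) ^ w.degree := by
        rw [show (8 : ℝ) = 2 * 4 by norm_num, mul_pow, mul_pow, pow_mul]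
        ring

end GevreyBound

lemma Finsupp.sum_eq_degree {σ : Type*} (n : σ →₀ ℕ) : (n.sum fun _ e => e) = n.degree := rfl

lemma coeff_borelT (F : F3) (n : Fin 3 →₀ ℕ) : coeff n (borelT F) = ((n 0)! : ℂ)⁻¹ * coeff n F :=
  rfl

lemma borelT_borelTInv (f : F3) : borelT (borelTInv f) = f := by
  ext n
  exact inv_mul_cancel_left₀ (Nat.cast_ne_zero.2 (Nat.factorial_ne_zero _)) (coeff n f)

lemma norm_coeff_eq_factorial_mul_norm_coeff_borelT (F : F3) (n : Fin 3 →₀ ℕ) :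
    ‖coeff n F‖ = (n 0)! * ‖coeff n (borelT F)‖ := by
  rw [coeff_borelT, norm_mul, norm_inv, Complex.norm_natCast,
    mul_inv_cancel_left₀ (by positivity)]

lemma isConvergent_borelT_iff {F : F3} :
    IsConvergent (borelT F) ↔ ∃ C r, 0 ≤ C ∧ 1 ≤ r ∧ GevreyBound C r F := by
  simp only [IsConvergent, GevreyBound, Finsupp.sum_eq_degree,
    norm_coeff_eq_factorial_mul_norm_coeff_borelT F]
  constructor
  · rintro ⟨C, r, hCr⟩
    refine ⟨|C|, max |r| 1, abs_nonneg C, le_max_right _ _, fun n => ?_⟩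
    rw [mul_comm |C|, mul_assoc]
    gcongr
    calc ‖coeff n (borelT F)‖ ≤ C * r ^ n.degree := hCr n
      _ ≤ |C| * |r| ^ n.degree := by
          rw [← abs_pow, ← abs_mul]
          exact le_abs_self _
      _ ≤ |C| * max |r| 1 ^ n.degree := by
          gcongr
          exact le_max_left _ _
  · rintro ⟨C, r, -, -, hF⟩
    refine ⟨C, r, fun n => le_of_mul_le_mul_left ?_ (by positivity : (0 : ℝ) < (n 0)!)⟩
    linarith [hF n]

/-- If f̂ and ĝ are convergent, so is f̂ ∗ ĝ; consequently the space of 1-Gevrey series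
β⁻¹(ℂ{ξ,q,p}) is closed under the standard star product. -/
theorem astS_convergent :
    (∀ f g : F3, IsConvergent f → IsConvergent g → IsConvergent (astS f g)) ∧
    (∀ F G : F3, IsConvergent (borelT F) → IsConvergent (borelT G) →
      IsConvergent (borelT (starS F G))) := by
  have hstarS : ∀ F G : F3, IsConvergent (borelT F) → IsConvergent (borelT G) →
      IsConvergent (borelT (starS F G)) := by
    intro F G hF hG
    obtain ⟨C, r, hC, hr, hFr⟩ := isConvergent_borelT_iff.1 hF
    obtain ⟨D, s, hD, hs, hGs⟩ := isConvergent_borelT_iff.1 hG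
    have hFt := hFr.mono hC (by linarith) (le_max_left r s)
    have hGt := hGs.mono hD (by linarith) (le_max_right r s)
    have ht : 1 ≤ max r s := hr.trans (le_max_left r s)
    exact isConvergent_borelT_iff.2
      ⟨C * D, 8 * max r s ^ 2, by positivity, by nlinarith, hFt.starS hGt hC hD ht⟩
  refine ⟨fun f g hf hg => hstarS _ _ ?_ ?_, hstarS⟩
  · rwa [borelT_borelTInv]
  · rwa [borelT_borelTInv]

end
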